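/- arXiv:2003.09964 — 4 statements merged into one kernel-verified Lean document; each statement's English description precedes it below -/
import Mathlib

section
/- Let (A,B) and (Ã,B̃) be orthogonally equivalent standard nondegenerate HIN pairs, with Ã = TᵀAT and B̃ = TᵀB for a real orthogonal matrix T. Suppose that for some k with 1 ≤ k < n one has A_{k+1,k} = 0, B_{1,1} > 0, and A_{j+1,j} > 0 for all j < k. Then T = I_k ⊕ U for some (n−k)×(n−k) orthogonal matrix U (i.e., T is block diagonal with identity in the top-left k×k block), and moreover Ã_{k+1,k} = 0. -/
/-!
Since `B' = Tᵀ B` and the first columns of `B`, `B'` are nonnegative multiples of `e₁` with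
`B₁₁ > 0`, the first row of `T` is a nonnegative multiple of `e₁ᵀ`, hence `e₁ᵀ`, and by
orthogonality `T e₁ = e₁`. If `T` fixes `e₁, …, e_j`, column `j` of `A T = T A'` says that below
the diagonal column `j` of `A` is `A'_{j+1,j}` times column `j + 1` of `T`. As `A` is Hessenberg,
`A_{j+1,j} > 0` and `A'_{j+1,j} ≥ 0`, column `j + 1` of `T` is a positive multiple of `e_{j+1}`,
hence equal to it. The same comparison for `A' Tᵀ = Tᵀ A` at `j = k` gives
`A'_{k+1,k} = T_{k+1,k+1} A_{k+1,k} = 0`.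
-/

open Matrix

/-- `(A,B)` is in Hessenberg form: `A` is upper Hessenberg, `B 0 0 ≥ 0`, and the rest of the
first column of `B` vanishes. -/
def IsHessenbergPair {n d : ℕ} [NeZero n] [NeZero d] (A : Matrix (Fin n) (Fin n) ℝ)
    (B : Matrix (Fin n) (Fin d) ℝ) : Prop :=
  (∀ i j : Fin n, (j : ℕ) + 1 < (i : ℕ) → A i j = 0) ∧
  0 ≤ B 0 0 ∧
  ∀ j : Fin n, j ≠ 0 → B j 0 = 0

/-- `(A,B)` is input normal: `A Aᵀ + B Bᵀ = I`. -/
def InputNormal {n d : ℕ} (A : Matrix (Fin n) (Fin n) ℝ)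
    (B : Matrix (Fin n) (Fin d) ℝ) : Prop :=
  A * Aᵀ + B * Bᵀ = 1

/-- A Hessenberg pair is standard if the subdiagonal of `A` is nonnegative and
`0 ≤ B 0 0 ≤ 1`. -/
def StandardPair {n d : ℕ} [NeZero n] [NeZero d] (A : Matrix (Fin n) (Fin n) ℝ)
    (B : Matrix (Fin n) (Fin d) ℝ) : Prop :=
  (∀ i j : Fin n, (i : ℕ) = (j : ℕ) + 1 → 0 ≤ A i j) ∧ 0 ≤ B 0 0 ∧ B 0 0 ≤ 1

/-- A Hessenberg pair is nondegenerate if `B 0 0 < 1`. -/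
def NondegeneratePair {n d : ℕ} [NeZero n] [NeZero d] (A : Matrix (Fin n) (Fin n) ℝ)
    (B : Matrix (Fin n) (Fin d) ℝ) : Prop :=
  B 0 0 < 1

namespace Matrix

section Orthogonal

variable {ι κ : Type*} [Fintype ι] [DecidableEq ι] {T : Matrix ι ι ℝ}

theorem row_eq_single_of_transpose_row_eq_single (hT : Tᵀ * T = 1) {j : ι}
    (h : Tᵀ j = Pi.single j 1) : T j = Pi.single j 1 :=
  calc T j = Tᵀ j ᵥ* T := by rw [h, single_one_vecMul]; rfl
    _ = (Tᵀ * T) j := (mul_apply_eq_vecMul _ _ _).symm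
    _ = Pi.single j 1 := by rw [hT]; exact funext fun _ => one_eq_pi_single

theorem transpose_row_eq_single_of_offDiag_eq_zero (hT : Tᵀ * T = 1) {j : ι}
    (hoff : ∀ r, r ≠ j → T r j = 0) (hdiag : 0 ≤ T j j) : Tᵀ j = Pi.single j 1 := by
  have hsq : T j j * T j j = 1 := by
    have h := congrFun (congrFun hT j) j
    rwa [mul_apply, Finset.sum_eq_single j (fun r _ hr => by simp [hoff r hr]) (by simp),
      one_apply_eq] at h
  have hjj : T j j = 1 := by nlinarith
  ext r
  rcases eq_or_ne r j with rfl | hr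
  · simp [hjj]
  · simp [hoff r hr, hr]

theorem row_eq_single_of_transpose_mul (hT : T * Tᵀ = 1) (B : Matrix ι κ ℝ)
    {i : ι} {q : κ} (hB : ∀ x, x ≠ i → B x q = 0) (hBi : 0 < B i q)
    (hB' : ∀ x, x ≠ i → (Tᵀ * B) x q = 0) (hB'i : 0 ≤ (Tᵀ * B) i q) :
    T i = Pi.single i 1 := by
  have hTB : ∀ x, (Tᵀ * B) x q = T i x * B i q := fun x => by
    rw [mul_apply, Finset.sum_eq_single i (fun y _ hy => by simp [hB y hy]) (by simp)]
    rfl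
  have hoff : ∀ x, x ≠ i → Tᵀ x i = 0 := fun x hx =>
    (mul_eq_zero.mp ((hTB x).symm.trans (hB' x hx))).resolve_right hBi.ne'
  have hdiag : 0 ≤ Tᵀ i i := nonneg_of_mul_nonneg_left ((hTB i) ▸ hB'i) hBi
  simpa using transpose_row_eq_single_of_offDiag_eq_zero (T := Tᵀ) (by simpa using hT) hoff hdiag

end Orthogonal

def IsUpperHessenberg {R : Type*} [Zero R] {n : ℕ} (A : Matrix (Fin n) (Fin n) R) : Prop :=
  ∀ i j : Fin n, (j : ℕ) + 1 < i → A i j = 0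

section Hessenberg

variable {n : ℕ} {A A' T : Matrix (Fin n) (Fin n) ℝ}

/-- Column `j` of `A T = T A'`: on the left it is column `j` of `A`; on the right, below row `j`,
only the term of index `i = j + 1` survives. -/
theorem apply_eq_mul_subdiag_of_mul_eq_mul (hA' : IsUpperHessenberg A') (hint : A * T = T * A')
    {i j : Fin n} (hij : (i : ℕ) = j + 1) (hfix : ∀ c, c ≤ j → Tᵀ c = Pi.single c 1)
    {r : Fin n} (hr : j < r) : A r j = T r i * A' i j := by
  have hTj : ∀ s, T s j = (Pi.single j 1 : Fin n → ℝ) s := fun s => congrFun (hfix j le_rfl) s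
  have h := congrFun (congrFun hint r) j
  rw [mul_apply, Finset.sum_eq_single j (fun s _ hs => by simp [hTj, hs]) (by simp), hTj,
    Pi.single_eq_same, mul_one, mul_apply, Finset.sum_eq_single i _ (by simp)] at h
  · exact h
  intro c _ hci
  rcases le_or_gt c j with hcj | hjc
  · have hrc : r ≠ c := fun h => absurd hcj (h ▸ hr).not_ge
    simp [show T r c = 0 by simpa [hrc] using congrFun (hfix c hcj) r]
  · rw [hA' c j (by omega), mul_zero]

theorem transpose_row_eq_single_of_subdiag_pos (hA : IsUpperHessenberg A)
    (hA' : IsUpperHessenberg A') (hT : Tᵀ * T = 1) (hint : A * T = T * A') {i j : Fin n}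
    (hij : (i : ℕ) = j + 1) (hfix : ∀ c, c ≤ j → Tᵀ c = Pi.single c 1) (hpos : 0 < A i j)
    (hnn : 0 ≤ A' i j) : Tᵀ i = Pi.single i 1 := by
  have hji : j < i := by omega
  have hii := apply_eq_mul_subdiag_of_mul_eq_mul hA' hint hij hfix hji
  have hA'pos : 0 < A' i j := hnn.lt_of_ne fun h => by simp [← h, hpos.ne'] at hii
  refine transpose_row_eq_single_of_offDiag_eq_zero hT (fun r hri => ?_) (pos_of_mul_pos_left
    (hii ▸ hpos) hA'pos.le).le
  rcases lt_or_gt_of_ne hri with hlt | hgt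
  · have hrj : r ≤ j := by omega
    simpa [hri.symm] using congrFun (row_eq_single_of_transpose_row_eq_single hT (hfix r hrj)) i
  · have h := apply_eq_mul_subdiag_of_mul_eq_mul hA' hint hij hfix (hji.trans hgt)
    rw [hA r j (by omega)] at h
    exact (mul_eq_zero.mp h.symm).resolve_right hA'pos.ne'

theorem transpose_row_eq_single_of_lt [NeZero n] (hA : IsUpperHessenberg A)
    (hA' : IsUpperHessenberg A') (hT : Tᵀ * T = 1) (hint : A * T = T * A')
    (h0 : Tᵀ 0 = Pi.single 0 1) (hnn : ∀ i j : Fin n, (i : ℕ) = j + 1 → 0 ≤ A' i j) {k : ℕ}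
    (hpos : ∀ i j : Fin n, (i : ℕ) = j + 1 → (i : ℕ) < k → 0 < A i j) :
    ∀ c : Fin n, (c : ℕ) < k → Tᵀ c = Pi.single c 1 := by
  suffices h : ∀ m, m < k → ∀ c : Fin n, (c : ℕ) ≤ m → Tᵀ c = Pi.single c 1 from
    fun c hc => h c hc c le_rfl
  intro m
  induction m with
  | zero =>
    intro _ c hc
    rwa [show c = 0 from Fin.ext (by simpa using hc)]
  | succ m ih =>
    intro hmk c hc
    rcases Nat.lt_or_eq_of_le hc with hlt | heq
    · exact ih (by omega) c (by omega)
    · have hm : m < n := by omega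
      have hij : (c : ℕ) = (⟨m, hm⟩ : Fin n) + 1 := heq
      exact transpose_row_eq_single_of_subdiag_pos hA hA' hT hint hij
        (fun c' hc' => ih (by omega) c' hc') (hpos c _ hij (by omega)) (hnn c _ hij)

end Hessenberg

end Matrix

/-- Implicit-Q lemma for HIN pairs: if `(A,B)` and `(A',B') = (Tᵀ A T, Tᵀ B)` are orthogonally
equivalent standard nondegenerate HIN pairs, `A_{k+1,k} = 0` (1-based), `B_{1,1} > 0`, and
`A_{j+1,j} > 0` for all `1 ≤ j < k`, then `T = I_k ⊕ U` for some orthogonal `U`, and moreover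
`A'_{k+1,k} = 0`. -/
theorem implicitQ_HIN (n d : ℕ) [NeZero n] [NeZero d]
    (A A' : Matrix (Fin n) (Fin n) ℝ) (B B' : Matrix (Fin n) (Fin d) ℝ)
    (hHess : IsHessenbergPair A B)
    (hHess' : IsHessenbergPair A' B')
    (hStd' : StandardPair A' B')
    (T : Matrix (Fin n) (Fin n) ℝ) (hT : Tᵀ * T = 1)
    (hA' : A' = Tᵀ * A * T) (hB' : B' = Tᵀ * B)
    (k : ℕ) (hk1 : 1 ≤ k) (hk2 : k < n)
    (hzero : A ⟨k, hk2⟩ ⟨k - 1, by omega⟩ = 0)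
    (hBpos : 0 < B 0 0)
    (hsub : ∀ j : ℕ, 1 ≤ j → j < k → ∀ (hj : j < n) (hj' : j - 1 < n),
        0 < A ⟨j, hj⟩ ⟨j - 1, hj'⟩) :
    (∀ i j : Fin n, ((i : ℕ) < k ∨ (j : ℕ) < k) →
        T i j = if (i : ℕ) = (j : ℕ) then 1 else 0) ∧
    A' ⟨k, hk2⟩ ⟨k - 1, by omega⟩ = 0 := by
  have hT' : T * Tᵀ = 1 := mul_eq_one_comm.mp hT
  have hAT : A * T = T * A' := by
    rw [hA', ← Matrix.mul_assoc, ← Matrix.mul_assoc, hT', Matrix.one_mul]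
  have hA'T : A' * Tᵀ = Tᵀ * A := by
    rw [hA', Matrix.mul_assoc, hT', Matrix.mul_one]
  have hrow0 : T 0 = Pi.single 0 1 :=
    row_eq_single_of_transpose_mul hT' B hHess.2.2 hBpos (hB' ▸ hHess'.2.2) (hB' ▸ hHess'.2.1)
  have hcol0 : Tᵀ 0 = Pi.single 0 1 :=
    row_eq_single_of_transpose_row_eq_single (T := Tᵀ) (by simpa using hT') (by simpa using hrow0)
  have hcol : ∀ c : Fin n, (c : ℕ) < k → Tᵀ c = Pi.single c 1 :=
    transpose_row_eq_single_of_lt hHess.1 hHess'.1 hT hAT hcol0 hStd'.1 fun i j hij hik =>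
      by convert hsub i (by omega) hik i.isLt (by omega) using 2; ext; simp [hij]
  have hrow : ∀ r : Fin n, (r : ℕ) < k → T r = Pi.single r 1 := fun r hr =>
    row_eq_single_of_transpose_row_eq_single hT (hcol r hr)
  refine ⟨fun i j hij => ?_, ?_⟩
  · rcases hij with hi | hj
    · simpa [Pi.single_apply, Fin.val_inj, eq_comm] using congrFun (hrow i hi) j
    · simpa [Pi.single_apply, Fin.val_inj] using congrFun (hcol j hj) i
  · rw [apply_eq_mul_subdiag_of_mul_eq_mul (T := Tᵀ) (i := ⟨k, hk2⟩)
      (j := ⟨k - 1, by omega⟩) hHess.1 hA'T (by simp; omega)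
      (fun c hc => by simpa using hrow c (by simp [Fin.le_def] at hc; omega))
      (by simp [Fin.lt_def]; omega), hzero, mul_zero]
end

section
/- Let (A,B) be a strict nondegenerate HIN pair (i.e., (A,B) is a HIN pair with A_{i+1,i} > 0 for all 1 ≤ i < n and 0 < B_{1,1} < 1), and let (Ã,B̃) be a strict HIN pair that is orthogonally equivalent to (A,B) via an orthogonal matrix T (Ã = TᵀAT, B̃ = TᵀB). Then Ã = A and B̃ = B. -/
open Matrix

/-- A Hessenberg pair is strict if it is unreduced (`A_{i+1,i} ≠ 0`, `B 0 0 ≠ 0`) and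
standard (`A_{i+1,i} ≥ 0`, `0 ≤ B 0 0 ≤ 1`); equivalently `A_{i+1,i} > 0` on the whole
subdiagonal and `0 < B 0 0 ≤ 1`. -/
def StrictPair {n d : ℕ} [NeZero n] [NeZero d] (A : Matrix (Fin n) (Fin n) ℝ)
    (B : Matrix (Fin n) (Fin d) ℝ) : Prop :=
  (∀ i j : Fin n, (i : ℕ) = (j : ℕ) + 1 → 0 < A i j) ∧ 0 < B 0 0 ∧ B 0 0 ≤ 1

/-!
The orthogonal matrix `T` is forced to be the identity. Suppose the columns of `T` before `r` are
the standard basis vectors, hence so are its rows. For `r = 0` take the first columns `v` of `B`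
and `w` of `B' = Tᵀ B`; for `r = k + 1` take the `k`-th columns `v` of `A`, which is also that
of `A T`, and `w` of `A' = Tᵀ (A T)`. In both cases `Tᵀ v = w`, both vectors vanish beyond
coordinate `r` (Hessenberg form) and are positive at `r` (strictness). For `j ≥ r` this reads
`w j = T r j * v r`, so row `r` of `T` is a positive multiple of `e_r`; being a unit vector, it
is `e_r`.
-/

namespace Matrix

variable {ι R : Type*} [Fintype ι]

section CommRing

variable [CommRing R]

theorem col_mul {m o : Type*} (M : Matrix m ι R) (N : Matrix ι o R) (k : o) :
    (M * N).col k = M *ᵥ N.col k :=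
  rfl

variable [DecidableEq ι] {T : Matrix ι ι R}

theorem row_dotProduct_self_of_transpose_mul_self (hT : Tᵀ * T = 1) (i : ι) :
    T i ⬝ᵥ T i = 1 := by
  have hT' : T * Tᵀ = 1 := mul_eq_one_comm.mp hT
  simpa [mul_apply', one_apply] using congrFun (congrFun hT' i) i

theorem col_dotProduct_self_of_transpose_mul_self (hT : Tᵀ * T = 1) (j : ι) :
    T.col j ⬝ᵥ T.col j = 1 := by
  simpa [mul_apply', one_apply, col_apply', dotProduct] using congrFun (congrFun hT j) j

end CommRing

variable [CommRing R] [LinearOrder R] [IsStrictOrderedRing R]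

theorem eq_zero_of_dotProduct_self_eq_one_of_apply_eq_one {x : ι → R} (hx : x ⬝ᵥ x = 1)
    {i : ι} (hi : x i = 1) {j : ι} (hj : j ≠ i) : x j = 0 := by
  classical
  have hrest : ∑ k ∈ Finset.univ.erase i, x k * x k = 0 := by
    have := Finset.add_sum_erase Finset.univ (fun k => x k * x k) (Finset.mem_univ i)
    rw [← dotProduct, hx, hi] at this
    linarith
  rw [Finset.sum_eq_zero_iff_of_nonneg fun k _ => mul_self_nonneg (x k)] at hrest
  exact mul_self_eq_zero.mp (hrest j (Finset.mem_erase.mpr ⟨hj, Finset.mem_univ j⟩))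

theorem apply_eq_one_of_dotProduct_self_eq_one {x : ι → R} (hx : x ⬝ᵥ x = 1) {i : ι}
    (hsupp : ∀ j, j ≠ i → x j = 0) (hpos : 0 < x i) : x i = 1 := by
  have hsq : x i * x i = 1 := by
    rw [← hx, dotProduct, Finset.sum_eq_single i (fun j _ hj => by simp [hsupp j hj])
      (fun h => absurd (Finset.mem_univ i) h)]
  nlinarith

variable [DecidableEq ι] {T : Matrix ι ι R}

theorem apply_eq_zero_of_transpose_mul_self_of_apply_eq_one_left (hT : Tᵀ * T = 1) {i j k : ι}
    (h : T i j = 1) (hk : k ≠ j) : T i k = 0 :=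
  eq_zero_of_dotProduct_self_eq_one_of_apply_eq_one
    (row_dotProduct_self_of_transpose_mul_self hT i) h hk

theorem apply_eq_zero_of_transpose_mul_self_of_apply_eq_one_right (hT : Tᵀ * T = 1) {i j k : ι}
    (h : T i j = 1) (hk : k ≠ i) : T k j = 0 :=
  eq_zero_of_dotProduct_self_eq_one_of_apply_eq_one
    (col_dotProduct_self_of_transpose_mul_self hT j) h hk

theorem col_eq_single_of_transpose_mul_self (hT : Tᵀ * T = 1) {k : ι} (h : T k k = 1) :
    T.col k = Pi.single k 1 := by
  ext i
  by_cases hi : i = k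
  · subst hi; simpa using h
  · simpa [hi] using apply_eq_zero_of_transpose_mul_self_of_apply_eq_one_right hT h hi

theorem eq_one_of_transpose_mul_self_of_diag_eq_one (hT : Tᵀ * T = 1) (h : ∀ i, T i i = 1) :
    T = 1 := by
  ext i j
  by_cases hij : i = j
  · subst hij; simpa using h i
  · simpa [one_apply, hij] using
      apply_eq_zero_of_transpose_mul_self_of_apply_eq_one_right hT (h j) hij

theorem apply_self_eq_one_of_transpose_mulVec_eq [LinearOrder ι] (hT : Tᵀ * T = 1) {r : ι}
    (hprev : ∀ a < r, T a a = 1) {v w : ι → R} (hv : ∀ a, r < a → v a = 0) (hvr : 0 < v r)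
    (hw : ∀ a, r < a → w a = 0) (hwr : 0 < w r) (hTvw : Tᵀ *ᵥ v = w) : T r r = 1 := by
  have hentry : ∀ j, r ≤ j → w j = T r j * v r := by
    intro j hj
    rw [← hTvw, mulVec, dotProduct]
    refine Finset.sum_eq_single r (fun a _ ha => ?_) (fun h => absurd (Finset.mem_univ r) h)
    rcases lt_or_gt_of_ne ha with ha | ha
    · simp [apply_eq_zero_of_transpose_mul_self_of_apply_eq_one_left hT (hprev a ha)
        (ne_of_gt (ha.trans_le hj))]
    · simp [hv a ha]
  refine apply_eq_one_of_dotProduct_self_eq_one (row_dotProduct_self_of_transpose_mul_self hT r)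
    (fun j hj => ?_) (pos_of_mul_pos_left (hentry r le_rfl ▸ hwr) hvr.le)
  rcases lt_or_gt_of_ne hj with hj | hj
  · exact apply_eq_zero_of_transpose_mul_self_of_apply_eq_one_right hT (hprev j hj) hj.ne'
  · have := hentry j hj.le
    rw [hw j hj] at this
    exact (mul_eq_zero.mp this.symm).resolve_right hvr.ne'

end Matrix

theorem strict_HIN_unique_general (n d : ℕ) [NeZero n] [NeZero d]
    (A A' : Matrix (Fin n) (Fin n) ℝ) (B B' : Matrix (Fin n) (Fin d) ℝ)
    (hHess : IsHessenbergPair A B)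
    (hStrict : StrictPair A B)
    (hHess' : IsHessenbergPair A' B')
    (hStrict' : StrictPair A' B')
    (T : Matrix (Fin n) (Fin n) ℝ) (hT : Tᵀ * T = 1)
    (hA' : A' = Tᵀ * A * T) (hB' : B' = Tᵀ * B) :
    A' = A ∧ B' = B := by
  have hdiag : ∀ r, T r r = 1 := fun r => WellFoundedLT.induction r fun r hprev => by
    by_cases hr : (r : ℕ) = 0
    · obtain rfl : r = 0 := Fin.ext hr
      refine apply_self_eq_one_of_transpose_mulVec_eq hT hprev (v := B.col 0) (w := B'.col 0)
        (fun a ha => hHess.2.2 a ha.ne') hStrict.2.1 (fun a ha => hHess'.2.2 a ha.ne')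
        hStrict'.2.1 ?_
      rw [hB', col_mul]
    · set k : Fin n := ⟨r - 1, by omega⟩
      have hrk : (r : ℕ) = k + 1 := by simp only [k]; omega
      have hkr : k < r := by rw [Fin.lt_def]; omega
      refine apply_self_eq_one_of_transpose_mulVec_eq hT hprev (v := A.col k) (w := A'.col k)
        (fun a ha => hHess.1 a k (by rw [Fin.lt_def] at ha; omega)) (hStrict.1 r k hrk)
        (fun a ha => hHess'.1 a k (by rw [Fin.lt_def] at ha; omega)) (hStrict'.1 r k hrk) ?_
      rw [hA', col_mul, col_eq_single_of_transpose_mul_self hT (hprev k hkr), mulVec_single_one,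
        col_mul]
  obtain rfl := eq_one_of_transpose_mul_self_of_diag_eq_one hT hdiag
  simp [hA', hB']

/-- Uniqueness of strict HIN pairs in an orthogonal equivalence class: if `(A,B)` is a strict
nondegenerate HIN pair and `(A',B') = (Tᵀ A T, Tᵀ B)` is a strict HIN pair orthogonally
equivalent to it, then `A' = A` and `B' = B`. -/
theorem strict_HIN_unique (n d : ℕ) [NeZero n] [NeZero d]
    (A A' : Matrix (Fin n) (Fin n) ℝ) (B B' : Matrix (Fin n) (Fin d) ℝ)
    (hHess : IsHessenbergPair A B) (hIN : InputNormal A B)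
    (hStrict : StrictPair A B) (hNdg : B 0 0 < 1)
    (hHess' : IsHessenbergPair A' B') (hIN' : InputNormal A' B')
    (hStrict' : StrictPair A' B')
    (T : Matrix (Fin n) (Fin n) ℝ) (hT : Tᵀ * T = 1)
    (hA' : A' = Tᵀ * A * T) (hB' : B' = Tᵀ * B) :
    A' = A ∧ B' = B :=
  strict_HIN_unique_general n d A A' B B' hHess hStrict hHess' hStrict' T hT hA' hB'
end

section
/- Fix d ≥ 1 and work in ℝ^{d+1}. Let X = { x ∈ ℝ^{d+1} : ∑_{j=1}^{d+1} x_j² = 1 and x_d ≥ 0 }. For angles θ = (θ_1,…,θ_d) define g(θ) = (0,…,0,1) · G_{d+1,d}(θ_d) G_{d,d−1}(θ_{d−1}) ⋯ G_{3,2}(θ_2) G_{2,1}(θ_1), and let Θ be the set of angle tuples with 0 ≤ θ_1 ≤ π and −π/2 < θ_j ≤ π/2 for 2 ≤ j ≤ d. Then the map θ ↦ g(θ) restricted to Θ is one-to-one over the set of x ∈ X with x_1 ≠ 0: if θ, θ' ∈ Θ satisfy g(θ) = g(θ') = x with x_1 ≠ 0, then θ = θ'. -/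
/-!
Write `S_j = sin θ_{j+1} ⋯ sin θ_d`. With coordinates indexed from `0`, the point `x = g(θ)` has
`x_0 = S_0` and `x_j = S_j cos θ_j` for `1 ≤ j ≤ d`, while `S_{j-1} = S_j sin θ_j`. So once
`S_{j-1}` is known, `(x_j, S_{j-1}) = S_j (cos θ_j, sin θ_j)` determines `θ_j` and `S_j` as polar
coordinates, up to the ambiguity `(S_j, θ_j) ↦ (-S_j, θ_j + π)`. This is ruled out because
`θ_1 ∈ [0, π]` with `sin θ_1 ≠ 0`, and `(-π/2, π/2]` contains no pair of antipodal angles.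
Starting from `S_0 = x_0 ≠ 0`, induction on `j` recovers all angles.
-/
open Matrix

/-- The `m × m` Givens rotation `G_{j,k}(θ)` (indices written 0-based here): the identity
except that the `(j,j)` and `(k,k)` entries equal `cos θ`, the `(j,k)` entry equals `sin θ`
and the `(k,j)` entry equals `-sin θ`. -/
noncomputable def givens (m : ℕ) (j k : ℕ) (θ : ℝ) : Matrix (Fin m) (Fin m) ℝ :=
  Matrix.of fun a b =>
    if (a : ℕ) = j ∧ (b : ℕ) = j then Real.cos θ
    else if (a : ℕ) = k ∧ (b : ℕ) = k then Real.cos θ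
    else if (a : ℕ) = j ∧ (b : ℕ) = k then Real.sin θ
    else if (a : ℕ) = k ∧ (b : ℕ) = j then -Real.sin θ
    else if a = b then 1 else 0

/-- `g(θ) = (0,…,0,1) ⬝ G_{d+1,d}(θ_d) G_{d,d-1}(θ_{d-1}) ⋯ G_{2,1}(θ_1)` in `ℝ^{d+1}`
(the `θ` are indexed 1-based; the Givens coordinate pairs are written 0-based). -/
noncomputable def gMap (d : ℕ) (θ : ℕ → ℝ) : Fin (d + 1) → ℝ :=
  Matrix.vecMul (Pi.single (Fin.last d) 1)
    (((List.range d).reverse.map fun i => givens (d + 1) (i + 1) i (θ (i + 1))).prod)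

open Finset Real

lemma Finset.prod_Ioc_eq_mul_prod_Ioc_succ {M : Type*} [CommMonoid M] (f : ℕ → M) {j n : ℕ}
    (h : j < n) : ∏ i ∈ Ioc j n, f i = f (j + 1) * ∏ i ∈ Ioc (j + 1) n, f i := by
  rw [← Icc_add_one_left_eq_Ioc, Icc_eq_cons_Ioc h, prod_cons]

section Polar

variable {r r' t t' : ℝ}

lemma mul_cos_mul_sin_eq_cases (hr : r ≠ 0) (hcos : r * cos t = r' * cos t')
    (hsin : r * sin t = r' * sin t') :
    (r' = r ∧ cos t = cos t' ∧ sin t = sin t') ∨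
      (r' = -r ∧ cos t = -cos t' ∧ sin t = -sin t') := by
  have hsq : r' ^ 2 = r ^ 2 := by
    linear_combination (-(r * cos t + r' * cos t')) * hcos
      + (-(r * sin t + r' * sin t')) * hsin - r' ^ 2 * sin_sq_add_cos_sq t'
      + r ^ 2 * sin_sq_add_cos_sq t
  rcases sq_eq_sq_iff_eq_or_eq_neg.mp hsq with rfl | rfl
  · exact .inl ⟨rfl, mul_left_cancel₀ hr hcos, mul_left_cancel₀ hr hsin⟩
  · exact .inr ⟨rfl, mul_left_cancel₀ hr (by rw [hcos]; ring),
      mul_left_cancel₀ hr (by rw [hsin]; ring)⟩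

lemma eq_of_mul_cos_eq_of_mul_sin_eq_of_mem_Icc (ht : t ∈ Set.Icc 0 π) (ht' : t' ∈ Set.Icc 0 π)
    (hrs : r * sin t ≠ 0) (hcos : r * cos t = r' * cos t') (hsin : r * sin t = r' * sin t') :
    t = t' ∧ r = r' := by
  rcases mul_cos_mul_sin_eq_cases (left_ne_zero_of_mul hrs) hcos hsin with
    ⟨rfl, hc, -⟩ | ⟨-, -, hs⟩
  · exact ⟨injOn_cos ht ht' hc, rfl⟩
  · have h0 : sin t = 0 := by
      linarith [sin_nonneg_of_nonneg_of_le_pi ht.1 ht.2, sin_nonneg_of_nonneg_of_le_pi ht'.1 ht'.2]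
    exact absurd (by rw [h0, mul_zero]) hrs

lemma eq_of_mul_cos_eq_of_mul_sin_eq_of_mem_Ioc (ht : t ∈ Set.Ioc (-(π / 2)) (π / 2))
    (ht' : t' ∈ Set.Ioc (-(π / 2)) (π / 2)) (hr : r ≠ 0) (hcos : r * cos t = r' * cos t')
    (hsin : r * sin t = r' * sin t') :
    t = t' ∧ r = r' := by
  rcases mul_cos_mul_sin_eq_cases hr hcos hsin with ⟨rfl, -, hs⟩ | ⟨-, hc, hs⟩
  · exact ⟨injOn_sin (Set.Ioc_subset_Icc_self ht) (Set.Ioc_subset_Icc_self ht') hs, rfl⟩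
  · have eq_pi_div_two : ∀ s ∈ Set.Ioc (-(π / 2)) (π / 2), cos s ≤ 0 → s = π / 2 :=
      fun s hs h => hs.2.antisymm <| not_lt.1 fun hlt => (cos_pos_of_mem_Ioo ⟨hs.1, hlt⟩).not_ge h
    have hc0 := cos_nonneg_of_mem_Icc (Set.Ioc_subset_Icc_self ht)
    have hc0' := cos_nonneg_of_mem_Icc (Set.Ioc_subset_Icc_self ht')
    rw [eq_pi_div_two t ht (by linarith), eq_pi_div_two t' ht' (by linarith), sin_pi_div_two] at hs
    norm_num at hs

end Polar

section Givens

variable {m : ℕ}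

lemma givens_row_of_ne (j k : ℕ) (t : ℝ) {a : Fin m} (hj : (a : ℕ) ≠ j) (hk : (a : ℕ) ≠ k) :
    givens m j k t a = Pi.single a 1 := by
  funext b
  simp [givens, Pi.single_apply, Ne.symm hj, Ne.symm hk, eq_comm]

lemma givens_row_left {j k : ℕ} (hjk : j ≠ k) (t : ℝ) {a b : Fin m} (ha : (a : ℕ) = j)
    (hb : (b : ℕ) = k) :
    givens m j k t a = Pi.single a (cos t) + Pi.single b (sin t) := by
  subst ha hb
  have hab : a ≠ b := fun h => hjk (congrArg _ h)
  funext c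
  by_cases hca : c = a
  · subst hca; simp [givens, hab]
  · by_cases hcb : c = b
    · subst hcb; simp [givens, hjk, Ne.symm hjk, Ne.symm hab]
    · simp [givens, hca, hcb, Fin.val_eq_val, Ne.symm hca]

end Givens

noncomputable def sphericalCoord (θ : ℕ → ℝ) (n k : ℕ) : ℝ :=
  if k ≤ n then (if k = 0 then 1 else cos (θ k)) * ∏ i ∈ Ioc k n, sin (θ i) else 0

lemma sphericalCoord_succ (θ : ℕ → ℝ) (n k : ℕ) :
    sphericalCoord θ (n + 1) k =
      (if k = n + 1 then cos (θ (n + 1)) else 0) + sin (θ (n + 1)) * sphericalCoord θ n k := by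
  unfold sphericalCoord
  rcases lt_trichotomy k (n + 1) with hk | rfl | hk
  · rw [prod_Ioc_succ_top (by omega)]
    simp only [hk.ne, Nat.le_of_lt_succ hk, hk.le, if_true, if_false, zero_add]
    split_ifs <;> ring
  · simp
  · simp [hk.ne', show ¬ k ≤ n + 1 by omega, show ¬ k ≤ n by omega]

/-- The product `G_{n+1,n}(θ_n) ⋯ G_{2,1}(θ_1)` of the first `n` rotations of `gMap`. -/
noncomputable def givensChain (m : ℕ) (θ : ℕ → ℝ) (n : ℕ) : Matrix (Fin m) (Fin m) ℝ :=
  ((List.range n).reverse.map fun i => givens m (i + 1) i (θ (i + 1))).prod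

section GivensChain

variable {m : ℕ} (θ : ℕ → ℝ)

lemma givensChain_zero : givensChain m θ 0 = 1 := rfl

lemma givensChain_succ (n : ℕ) :
    givensChain m θ (n + 1) = givens m (n + 1) n (θ (n + 1)) * givensChain m θ n := by
  simp [givensChain, List.range_succ]

lemma givensChain_row_of_lt {n : ℕ} {a : Fin m} (h : n < a) :
    givensChain m θ n a = Pi.single a 1 := by
  induction n with
  | zero => funext b; simp [givensChain_zero, Matrix.one_apply, Pi.single_apply, eq_comm]
  | succ n ih =>
    rw [givensChain_succ, mul_apply_eq_vecMul, givens_row_of_ne _ _ _ (by omega) (by omega),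
      single_one_vecMul, row, ih (by omega)]

lemma givensChain_row_apply {n : ℕ} (a : Fin m) (ha : (a : ℕ) = n) (k : Fin m) :
    givensChain m θ n a k = sphericalCoord θ n k := by
  induction n generalizing a with
  | zero =>
    by_cases hk : (k : ℕ) = 0 <;>
      simp [givensChain_zero, Matrix.one_apply, sphericalCoord, Fin.ext_iff, ha, hk, eq_comm]
  | succ n ih =>
    let b : Fin m := ⟨n, by omega⟩
    rw [givensChain_succ, mul_apply_eq_vecMul, givens_row_left n.succ_ne_self _ ha (b := b) rfl,
      add_vecMul, single_vecMul, single_vecMul, Pi.add_apply, Pi.smul_apply, Pi.smul_apply,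
      row, givensChain_row_of_lt θ (a := a) (by omega), ih b rfl, sphericalCoord_succ]
    simp [Pi.single_apply, Fin.ext_iff, ha]

end GivensChain

lemma gMap_apply (d : ℕ) (θ : ℕ → ℝ) (k : Fin (d + 1)) : gMap d θ k = sphericalCoord θ d k := by
  rw [gMap, single_one_vecMul]
  exact givensChain_row_apply θ (Fin.last d) rfl k

-- On each of the two angle ranges of `Θ`, the polar coordinates of `r (cos t, sin t)` with
-- `r sin t ≠ 0` are unique.
def InSameAngleRange (t t' : ℝ) : Prop :=
  t ∈ Set.Icc 0 π ∧ t' ∈ Set.Icc 0 π ∨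
    t ∈ Set.Ioc (-(π / 2)) (π / 2) ∧ t' ∈ Set.Ioc (-(π / 2)) (π / 2)

section Injectivity

variable {n : ℕ} {θ θ' : ℕ → ℝ}

lemma angle_eq_and_prod_sin_eq_of_sphericalCoord_eq {j : ℕ} (hj : j < n)
    (hθ : InSameAngleRange (θ (j + 1)) (θ' (j + 1)))
    (hx : sphericalCoord θ n (j + 1) = sphericalCoord θ' n (j + 1))
    (hS : ∏ i ∈ Ioc j n, sin (θ i) = ∏ i ∈ Ioc j n, sin (θ' i))
    (hS0 : ∏ i ∈ Ioc j n, sin (θ i) ≠ 0) :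
    θ (j + 1) = θ' (j + 1) ∧ ∏ i ∈ Ioc (j + 1) n, sin (θ i) = ∏ i ∈ Ioc (j + 1) n, sin (θ' i) := by
  have hcos : (∏ i ∈ Ioc (j + 1) n, sin (θ i)) * cos (θ (j + 1)) =
      (∏ i ∈ Ioc (j + 1) n, sin (θ' i)) * cos (θ' (j + 1)) := by
    simpa [sphericalCoord, Nat.succ_le_of_lt hj, mul_comm] using hx
  rw [prod_Ioc_eq_mul_prod_Ioc_succ _ hj, prod_Ioc_eq_mul_prod_Ioc_succ _ hj, mul_comm,
    mul_comm (sin _)] at hS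
  rw [prod_Ioc_eq_mul_prod_Ioc_succ _ hj, mul_comm] at hS0
  rcases hθ with ⟨ht, ht'⟩ | ⟨ht, ht'⟩
  · exact eq_of_mul_cos_eq_of_mul_sin_eq_of_mem_Icc ht ht' hS0 hcos hS
  · exact eq_of_mul_cos_eq_of_mul_sin_eq_of_mem_Ioc ht ht' (left_ne_zero_of_mul hS0) hcos hS

lemma prod_sin_eq_of_sphericalCoord_eq
    (hθ : ∀ j < n, InSameAngleRange (θ (j + 1)) (θ' (j + 1)))
    (hx : ∀ k ≤ n, sphericalCoord θ n k = sphericalCoord θ' n k)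
    (h0 : sphericalCoord θ n 0 ≠ 0) {j : ℕ} (hj : j ≤ n) :
    ∏ i ∈ Ioc j n, sin (θ i) = ∏ i ∈ Ioc j n, sin (θ' i) ∧ ∏ i ∈ Ioc j n, sin (θ i) ≠ 0 := by
  induction j with
  | zero => simpa [sphericalCoord] using And.intro (hx 0 hj) h0
  | succ j ih =>
    obtain ⟨hS, hS0⟩ := ih (by omega)
    refine ⟨(angle_eq_and_prod_sin_eq_of_sphericalCoord_eq hj (hθ j hj) (hx _ hj) hS hS0).2, ?_⟩
    rw [prod_Ioc_eq_mul_prod_Ioc_succ _ hj] at hS0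
    exact right_ne_zero_of_mul hS0

lemma eq_of_sphericalCoord_eq
    (hθ : ∀ j < n, InSameAngleRange (θ (j + 1)) (θ' (j + 1)))
    (hx : ∀ k ≤ n, sphericalCoord θ n k = sphericalCoord θ' n k)
    (h0 : sphericalCoord θ n 0 ≠ 0) {j : ℕ} (hj : j < n) :
    θ (j + 1) = θ' (j + 1) :=
  have hS := prod_sin_eq_of_sphericalCoord_eq hθ hx h0 hj.le
  (angle_eq_and_prod_sin_eq_of_sphericalCoord_eq hj (hθ j hj) (hx _ hj) hS.1 hS.2).1

end Injectivity

/-- The Givens-angle parameterization restricted to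
`Θ = {θ : θ_1 ∈ [0,π], θ_j ∈ (-π/2, π/2] for 2 ≤ j ≤ d}` is one-to-one over the
`x ∈ X` with `x_1 ≠ 0`: if `g(θ) = g(θ') = x` for `θ, θ' ∈ Θ` with `x 0 ≠ 0`, then the
angles agree. -/
theorem givens_param_one_to_one (d : ℕ)
    (x : Fin (d + 1) → ℝ)
    (hx1 : x 0 ≠ 0)
    (θ θ' : ℕ → ℝ)
    (hθ1 : 0 ≤ θ 1 ∧ θ 1 ≤ Real.pi)
    (hθj : ∀ j : ℕ, 2 ≤ j → j ≤ d → -(Real.pi / 2) < θ j ∧ θ j ≤ Real.pi / 2)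
    (hθ'1 : 0 ≤ θ' 1 ∧ θ' 1 ≤ Real.pi)
    (hθ'j : ∀ j : ℕ, 2 ≤ j → j ≤ d → -(Real.pi / 2) < θ' j ∧ θ' j ≤ Real.pi / 2)
    (hgθ : gMap d θ = x) (hgθ' : gMap d θ' = x) :
    ∀ j : ℕ, 1 ≤ j → j ≤ d → θ j = θ' j := by
  have hx (k : ℕ) (hk : k ≤ d) : sphericalCoord θ d k = sphericalCoord θ' d k := by
    simpa only [gMap_apply] using congrFun (hgθ.trans hgθ'.symm) ⟨k, by omega⟩
  have h0 : sphericalCoord θ d 0 ≠ 0 := by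
    rw [← hgθ, gMap_apply] at hx1
    simpa using hx1
  have hθ (j : ℕ) (hj : j < d) : InSameAngleRange (θ (j + 1)) (θ' (j + 1)) := by
    rcases j with _ | j
    · exact .inl ⟨hθ1, hθ'1⟩
    · exact .inr ⟨hθj _ (by omega) hj, hθ'j _ (by omega) hj⟩
  intro j hj1 hjd
  obtain ⟨i, rfl⟩ : ∃ i, j = i + 1 := ⟨j - 1, by omega⟩
  exact eq_of_sphericalCoord_eq hθ hx h0 hjd
end

section
/- Let d = 1 and let Θ be the set of angle tuples (θ_1,…,θ_n) with 0 ≤ θ_k ≤ π for each k. For θ ∈ Θ define (B | A) = (0_{n,1} | I_n) · G_{2,1}(θ_1) · G_{3,2}(θ_2) ⋯ G_{n+1,n}(θ_n), a product of (n+1)×(n+1) Givens rotations. Then the map θ ↦ (A,B) is one-to-one on Θ: if two tuples θ, θ' ∈ Θ produce the same pair (A,B), then θ = θ'. -/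
open Matrix

/-- The `n × (n+1)` matrix `(0_{n,1} | I_n)`. -/
def zeroId1 (n : ℕ) : Matrix (Fin n) (Fin (n + 1)) ℝ :=
  Matrix.of fun i j => if (j : ℕ) = 1 + (i : ℕ) then 1 else 0

/-- The `d = 1` Givens product representation
`(B | A) = (0_{n,1} | I_n) · G_{2,1}(θ_1) · G_{3,2}(θ_2) ⋯ G_{n+1,n}(θ_n)`
(1-based coordinate pairs, written 0-based in `givens`; `θ` is indexed 1-based). -/
noncomputable def reprBA1 (n : ℕ) (θ : ℕ → ℝ) : Matrix (Fin n) (Fin (n + 1)) ℝ :=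
  zeroId1 n * ((List.range n).map fun k => givens (n + 1) (k + 1) k (θ (k + 1))).prod

set_option linter.unreachableTactic false
set_option linter.unusedTactic false

/-- Right multiplication by a Givens rotation only changes columns `j` and `k`. -/
lemma mul_givens_apply {m : ℕ} (M : Matrix (Fin m) (Fin m) ℝ) (j k : ℕ)
    (hj : j < m) (hk : k < m) (hjk : j ≠ k) (φ : ℝ) (a b : Fin m) :
    (M * givens m j k φ) a b =
      if (b : ℕ) = j then Real.cos φ * M a ⟨j, hj⟩ - Real.sin φ * M a ⟨k, hk⟩
      else if (b : ℕ) = k then Real.sin φ * M a ⟨j, hj⟩ + Real.cos φ * M a ⟨k, hk⟩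
      else M a b := by
  rw [Matrix.mul_apply]
  by_cases hbj : (b : ℕ) = j
  · have hcol : ∀ c : Fin m, givens m j k φ c b =
        (if c = ⟨j, hj⟩ then Real.cos φ else 0) + (if c = ⟨k, hk⟩ then -Real.sin φ else 0) := by
      intro c
      simp only [givens, Matrix.of_apply, Fin.ext_iff]
      split_ifs <;> simp_all <;> omega
    simp only [hcol, mul_add, mul_ite, mul_zero, mul_neg, Finset.sum_add_distrib,
      Finset.sum_ite_eq', Finset.mem_univ, if_true, if_pos hbj]
    ring
  · by_cases hbk : (b : ℕ) = k
    · have hcol : ∀ c : Fin m, givens m j k φ c b =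
          (if c = ⟨j, hj⟩ then Real.sin φ else 0) + (if c = ⟨k, hk⟩ then Real.cos φ else 0) := by
        intro c
        simp only [givens, Matrix.of_apply, Fin.ext_iff]
        split_ifs <;> simp_all <;> omega
      simp only [hcol, mul_add, mul_ite, mul_zero, Finset.sum_add_distrib,
        Finset.sum_ite_eq', Finset.mem_univ, if_true, if_neg hbj, if_pos hbk]
      ring
    · have hcol : ∀ c : Fin m, givens m j k φ c b = if c = b then 1 else 0 := by
        intro c
        simp only [givens, Matrix.of_apply, Fin.ext_iff]
        split_ifs <;> simp_all <;> omega
      simp only [hcol, mul_ite, mul_one, mul_zero, Finset.sum_ite_eq', Finset.mem_univ,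
        if_true, if_neg hbj, if_neg hbk]

lemma mul_givens_mul_givens_neg {m : ℕ} (M : Matrix (Fin m) (Fin m) ℝ) (j k : ℕ)
    (hj : j < m) (hk : k < m) (hjk : j ≠ k) (φ : ℝ) :
    M * givens m j k φ * givens m j k (-φ) = M := by
  ext a b
  rw [mul_givens_apply _ j k hj hk hjk,
    mul_givens_apply M j k hj hk hjk φ a ⟨j, hj⟩,
    mul_givens_apply M j k hj hk hjk φ a ⟨k, hk⟩]
  simp only [Real.cos_neg, Real.sin_neg, if_pos rfl, if_neg (Ne.symm hjk), if_neg hjk]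
  split_ifs with h1 h2
  · rw [show (⟨j, hj⟩ : Fin m) = b from Fin.ext h1.symm]
    linear_combination M a b * Real.sin_sq_add_cos_sq φ
  · rw [show (⟨k, hk⟩ : Fin m) = b from Fin.ext h2.symm]
    linear_combination M a b * Real.sin_sq_add_cos_sq φ
  · rw [mul_givens_apply M j k hj hk hjk φ a b, if_neg h1, if_neg h2]

lemma isUnit_givens {m : ℕ} (j k : ℕ) (hj : j < m) (hk : k < m) (hjk : j ≠ k) (φ : ℝ) :
    IsUnit (givens m j k φ) := by
  have h1 : givens m j k φ * givens m j k (-φ) = 1 := by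
    have := mul_givens_mul_givens_neg (1 : Matrix (Fin m) (Fin m) ℝ) j k hj hk hjk φ
    rwa [one_mul] at this
  have h2 : givens m j k (-φ) * givens m j k φ = 1 := by
    have := mul_givens_mul_givens_neg (1 : Matrix (Fin m) (Fin m) ℝ) j k hj hk hjk (-φ)
    rwa [one_mul, neg_neg] at this
  exact ⟨⟨_, _, h1, h2⟩, rfl⟩

/-- Rows of index `> b` of the product of the first `b` Givens factors are rows of the
identity matrix. -/
lemma prod_givens_row_id (n : ℕ) (φ : ℕ → ℝ) :
    ∀ b : ℕ, b ≤ n → ∀ r c : Fin (n + 1), b < (r : ℕ) →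
    (((List.range b).map fun i => givens (n + 1) (i + 1) i (φ (i + 1))).prod) r c
      = if r = c then 1 else 0 := by
  intro b
  induction b with
  | zero => intro _ r c _; simp [Matrix.one_apply]
  | succ b ih =>
    intro hb r c hr
    rw [List.range_succ, List.map_append, List.prod_append, List.map_singleton,
      List.prod_singleton]
    rw [mul_givens_apply _ (b + 1) b (by omega) (by omega) (by omega)]
    have hrb : (b : ℕ) < (r : ℕ) := by omega
    have e1 : (((List.range b).map fun i => givens (n + 1) (i + 1) i (φ (i + 1))).prod) r
        ⟨b + 1, by omega⟩ = 0 := by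
      rw [ih (by omega) r _ hrb, if_neg (by simp [Fin.ext_iff]; omega)]
    have e2 : (((List.range b).map fun i => givens (n + 1) (i + 1) i (φ (i + 1))).prod) r
        ⟨b, by omega⟩ = 0 := by
      rw [ih (by omega) r _ hrb, if_neg (by simp [Fin.ext_iff]; omega)]
    by_cases h1 : (c : ℕ) = b + 1
    · rw [if_pos h1, e1, e2, if_neg (fun h => by rw [h] at hr; omega)]; ring
    · by_cases h2 : (c : ℕ) = b
      · rw [if_neg h1, if_pos h2, e1, e2, if_neg (fun h => by rw [h] at hr; omega)]; ring
      · rw [if_neg h1, if_neg h2]; exact ih (by omega) r c hrb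

/-- The `(k,k)` entry of the product of the first `k` Givens factors is `cos (φ k)`. -/
lemma prod_givens_diag (n : ℕ) (φ : ℕ → ℝ) (k : ℕ) (hk1 : 1 ≤ k) (hkn : k ≤ n) :
    (((List.range k).map fun i => givens (n + 1) (i + 1) i (φ (i + 1))).prod)
      ⟨k, by omega⟩ ⟨k, by omega⟩ = Real.cos (φ k) := by
  obtain ⟨b, rfl⟩ : ∃ b, k = b + 1 := ⟨k - 1, by omega⟩
  rw [List.range_succ, List.map_append, List.prod_append, List.map_singleton,
    List.prod_singleton]
  rw [mul_givens_apply _ (b + 1) b (by omega) (by omega) (by omega)]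
  rw [if_pos (by simp)]
  rw [prod_givens_row_id n φ b (by omega) _ _ (by simp),
    prod_givens_row_id n φ b (by omega) _ _ (by simp)]
  rw [if_pos rfl, if_neg (by simp [Fin.ext_iff])]
  ring

lemma zeroId1_mul_apply (n : ℕ) (M : Matrix (Fin (n + 1)) (Fin (n + 1)) ℝ)
    (i : Fin n) (b : Fin (n + 1)) :
    (zeroId1 n * M) i b = M ⟨1 + (i : ℕ), by omega⟩ b := by
  rw [Matrix.mul_apply]
  have h : ∀ j : Fin (n + 1), zeroId1 n i j = if j = ⟨1 + (i : ℕ), by omega⟩ then 1 else 0 := by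
    intro j; simp [zeroId1, Fin.ext_iff]
  simp only [h, ite_mul, one_mul, zero_mul, Finset.sum_ite_eq', Finset.mem_univ, if_true]

/-- For `d = 1` the Givens product representation is one-to-one on
`Θ = {θ : 0 ≤ θ_k ≤ π for all k}`: if two angle tuples in `Θ` produce the same pair
`(A,B)`, the angles agree. -/
theorem givens_param_one_to_one_d1 (n : ℕ) [NeZero n]
    (θ θ' : ℕ → ℝ)
    (hθ : ∀ k : ℕ, 1 ≤ k → k ≤ n → 0 ≤ θ k ∧ θ k ≤ Real.pi)
    (hθ' : ∀ k : ℕ, 1 ≤ k → k ≤ n → 0 ≤ θ' k ∧ θ' k ≤ Real.pi)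
    (heq : reprBA1 n θ = reprBA1 n θ') :
    ∀ k : ℕ, 1 ≤ k → k ≤ n → θ k = θ' k := by
  have key : ∀ k : ℕ, 1 ≤ k → k ≤ n → (∀ k', k < k' → k' ≤ n → θ k' = θ' k') →
      θ k = θ' k := by
    intro k h1 hkn htail
    have hsplit : List.range n = List.range k ++ (List.range (n - k)).map (k + ·) := by
      conv_lhs => rw [show n = k + (n - k) by omega, List.range_add]
    have htail_eq :
        ((List.range (n - k)).map (k + ·)).map
            (fun i => givens (n + 1) (i + 1) i (θ (i + 1))) =
          ((List.range (n - k)).map (k + ·)).map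
            (fun i => givens (n + 1) (i + 1) i (θ' (i + 1))) := by
      apply List.map_congr_left
      intro i hi
      obtain ⟨x, hx, rfl⟩ := List.mem_map.mp hi
      rw [List.mem_range] at hx
      rw [htail (k + x + 1) (by omega) (by omega)]
    have hTunit : IsUnit (((List.range (n - k)).map (k + ·)).map
        (fun i => givens (n + 1) (i + 1) i (θ (i + 1)))).prod := by
      apply List.prod_isUnit
      intro x hx
      obtain ⟨i, hi, rfl⟩ := List.mem_map.mp hx
      obtain ⟨y, hy, rfl⟩ := List.mem_map.mp hi
      rw [List.mem_range] at hy
      exact isUnit_givens (k + y + 1) (k + y) (by omega) (by omega) (by omega) _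
    have h2 : zeroId1 n * ((List.range k).map
          (fun i => givens (n + 1) (i + 1) i (θ (i + 1)))).prod =
        zeroId1 n * ((List.range k).map
          (fun i => givens (n + 1) (i + 1) i (θ' (i + 1)))).prod := by
      have h := heq
      unfold reprBA1 at h
      rw [hsplit, List.map_append, List.prod_append, List.map_append, List.prod_append,
        ← htail_eq, ← Matrix.mul_assoc, ← Matrix.mul_assoc] at h
      obtain ⟨u, hu⟩ := hTunit
      have h3 := congrArg (fun X => X * (↑u⁻¹ : Matrix (Fin (n + 1)) (Fin (n + 1)) ℝ)) h
      simpa only [Matrix.mul_assoc, ← hu, Units.mul_inv, mul_one] using h3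
    have h4 := congrFun (congrFun h2 ⟨k - 1, by omega⟩) ⟨k, by omega⟩
    rw [zeroId1_mul_apply, zeroId1_mul_apply] at h4
    have hidx : (⟨1 + (k - 1), by omega⟩ : Fin (n + 1)) = ⟨k, by omega⟩ := by
      simp [Fin.ext_iff]; omega
    rw [hidx] at h4
    rw [prod_givens_diag n θ k h1 hkn, prod_givens_diag n θ' k h1 hkn] at h4
    exact Real.injOn_cos ⟨(hθ k h1 hkn).1, (hθ k h1 hkn).2⟩
      ⟨(hθ' k h1 hkn).1, (hθ' k h1 hkn).2⟩ h4
  have main : ∀ m k : ℕ, 1 ≤ k → k ≤ n → n - k ≤ m → θ k = θ' k := by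
    intro m
    induction m using Nat.strong_induction_on with
    | _ m ih =>
      intro k h1 hkn hm
      apply key k h1 hkn
      intro k' hk' hk'n
      exact ih (n - k') (by omega) k' (by omega) hk'n le_rfl
  intro k h1 h2
  exact main (n - k) k h1 h2 le_rfl
end
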